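/- Let 0 = r_0 < r_1 < ... < r_n and let \rho > r_n. Setting \Lambda_1 = (r_0,...,r_n) and \Lambda_2 = (r_0,...,r_n,\rho), the Gelfond-Bernstein bases satisfy H^n_{k,\Lambda_1}(t) = ((\rho - r_k)/\rho) H^{n+1}_{k,\Lambda_2}(t) + (r_{k+1}/\rho) H^{n+1}_{k+1,\Lambda_2}(t) for k = 0,...,n (with the convention r_{n+1} = \rho). -/

import Mathlib

/-- The divided difference `[x 0, ..., x n] f` at pairwise distinct points,
given by the explicit formula `∑ i, f (x i) / ∏_{j ≠ i} (x i - x j)`. -/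
noncomputable def divSum (n : ℕ) (x : Fin (n+1) → ℝ) (f : ℝ → ℝ) : ℝ :=
  ∑ i : Fin (n+1), f (x i) / ∏ j ∈ Finset.univ.erase i, (x i - x j)


/-- The Gelfond-Bernstein basis function `H^n_{k,Λ}` associated with the sequence
`Λ = (r 0, ..., r n)`: `H^n_k (t) = (-1)^(n-k) r_{k+1} ⋯ r_n [r_k, ..., r_n] f_t`
for `k ≤ n-1` and `H^n_n (t) = t ^ (r n)`, where `f_t x = t ^ x` (real power). -/
noncomputable def GB (n : ℕ) (r : Fin (n+1) → ℝ) (k : Fin (n+1)) (t : ℝ) : ℝ :=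
  if k.val = n then t ^ (r k)
  else (-1 : ℝ) ^ (n - k.val) * (∏ j ∈ Finset.Ioi k, r j) *
    divSum (n - k.val)
      (fun i => r ⟨k.val + i.val, by have h1 := i.isLt; have h2 := k.isLt; omega⟩)
      (fun x => t ^ x)

/-! Written uniformly as `H^n_k = (-1)^(n-k) r_{k+1} ⋯ r_n [r_k, ..., r_n] f_t` (this also holds for
`k = n`), the identity is the divided-difference recurrence
`(ρ - r_k) [r_k, ..., r_n, ρ] f = [r_{k+1}, ..., r_n, ρ] f - [r_k, ..., r_n] f`
multiplied by `(-1)^(n-k) r_{k+1} ⋯ r_n`: the extra factor `ρ` in the products of the order-`(n+1)`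
basis functions is cancelled by the denominators `ρ`. -/

open Finset

section DividedDifference

variable {K ι : Type*} [Field K] [DecidableEq ι]

-- Nodes indexed by a finset rather than by `Fin (m + 1)`, so that dropping a node is `erase`.
noncomputable def divDiff (x : ι → K) (f : K → K) (s : Finset ι) : K :=
  ∑ i ∈ s, f (x i) / ∏ j ∈ s.erase i, (x i - x j)

theorem divDiff_singleton (x : ι → K) (f : K → K) (a : ι) : divDiff x f {a} = f (x a) := by
  simp [divDiff]

theorem divDiff_map {κ : Type*} [DecidableEq κ] (x : ι → K) (f : K → K) (e : κ ↪ ι)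
    (s : Finset κ) : divDiff x f (s.map e) = divDiff (x ∘ e) f s := by
  simp only [divDiff, sum_map, ← map_erase, prod_map, Function.comp_apply]

theorem divDiff_erase {x : ι → K} (f : K → K) {s : Finset ι} (hx : Set.InjOn x s) {a : ι}
    (ha : a ∈ s) :
    divDiff x f (s.erase a) = ∑ i ∈ s, f (x i) * (x i - x a) / ∏ j ∈ s.erase i, (x i - x j) := by
  rw [divDiff, ← sum_erase s (a := a) (by simp)]
  refine sum_congr rfl fun i hi => ?_
  obtain ⟨hia, hi⟩ := mem_erase.mp hi
  have hxia : x i - x a ≠ 0 := sub_ne_zero.mpr fun h => hia (hx hi ha h)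
  rw [erase_right_comm, ← mul_prod_erase _ _ (mem_erase.mpr ⟨Ne.symm hia, ha⟩),
    mul_comm (f (x i)), mul_div_mul_left _ _ hxia]

theorem sub_mul_divDiff {x : ι → K} (f : K → K) {s : Finset ι} (hx : Set.InjOn x s) {a b : ι}
    (ha : a ∈ s) (hb : b ∈ s) :
    (x b - x a) * divDiff x f s = divDiff x f (s.erase a) - divDiff x f (s.erase b) := by
  rw [divDiff_erase f hx ha, divDiff_erase f hx hb, ← sum_sub_distrib, divDiff, mul_sum]
  refine sum_congr rfl fun i _ => ?_
  ring

end DividedDifference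

namespace Fin

theorem Ioi_castSucc_eq_Ici_succ {n : ℕ} (k : Fin (n + 1)) : Ioi k.castSucc = Ici k.succ := by
  ext j; simp [castSucc_lt_iff_succ_le]

theorem Ioi_castSucc_eq_insert_last {n : ℕ} (k : Fin (n + 1)) :
    Ioi k.castSucc = insert (last (n + 1)) ((Ioi k).map castSuccEmb) := by
  rw [map_castSuccEmb_Ioi, Ioo_insert_right (castSucc_lt_last k)]
  ext j; simp [le_last]

theorem Ici_castSucc_erase_last {n : ℕ} (k : Fin (n + 1)) :
    (Ici k.castSucc).erase (last (n + 1)) = (Ici k).map castSuccEmb := by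
  ext j; simp [lt_last_iff_ne_last, and_comm]

theorem prod_Ioi_castSucc_snoc {M : Type*} [CommMonoid M] {n : ℕ} (r : Fin (n + 1) → M)
    (ρ : M) (k : Fin (n + 1)) :
    ∏ j ∈ Ioi k.castSucc, (snoc r ρ : Fin (n + 2) → M) j = ρ * ∏ j ∈ Ioi k, r j := by
  rw [Ioi_castSucc_eq_insert_last, prod_insert (by simp), prod_map]
  simp

theorem sub_mul_divDiff_snoc {K : Type*} [Field K] {n : ℕ} {r : Fin (n + 1) → K} {ρ : K}
    (hinj : Function.Injective (snoc r ρ : Fin (n + 2) → K)) (f : K → K) (k : Fin (n + 1)) :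
    (ρ - r k) * divDiff (snoc r ρ : Fin (n + 2) → K) f (Ici k.castSucc)
      = divDiff (snoc r ρ : Fin (n + 2) → K) f (Ici k.succ) - divDiff r f (Ici k) := by
  have h := sub_mul_divDiff f hinj.injOn (s := Ici k.castSucc) (a := k.castSucc)
    (b := last (n + 1)) (by simp) (by simp [le_last])
  rwa [Ici_erase, Ioi_castSucc_eq_Ici_succ, Ici_castSucc_erase_last, divDiff_map, snoc_last,
    snoc_castSucc, coe_castSuccEmb, snoc_comp_castSucc] at h

theorem mul_prod_Ioi_succ_snoc {M : Type*} [CommMonoid M] {n : ℕ} (r : Fin (n + 1) → M)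
    (ρ : M) (k : Fin (n + 1)) :
    (snoc r ρ : Fin (n + 2) → M) k.succ * ∏ j ∈ Ioi k.succ, (snoc r ρ : Fin (n + 2) → M) j
      = ρ * ∏ j ∈ Ioi k, r j := by
  rw [← prod_Ioi_castSucc_snoc r ρ k, Ioi_castSucc_eq_Ici_succ, Ici_eq_cons_Ioi, Finset.prod_cons]

end Fin

theorem divSum_eq_divDiff (m : ℕ) (x : Fin (m + 1) → ℝ) (f : ℝ → ℝ) :
    divSum m x f = divDiff x f univ := rfl

theorem GB_eq_divDiff (n : ℕ) (r : Fin (n + 1) → ℝ) (k : Fin (n + 1)) (t : ℝ) :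
    GB n r k t = (-1) ^ (n - k.val) * (∏ j ∈ Ioi k, r j) * divDiff r (t ^ ·) (Ici k) := by
  rw [GB]
  split_ifs with hk
  · obtain rfl : k = Fin.last n := Fin.ext hk
    simp [divDiff_singleton, ← Fin.top_eq_last]
  · let e : Fin (n - k.val + 1) ↪ Fin (n + 1) :=
      ⟨fun i => ⟨k.val + i.val, by omega⟩, fun i j h => Fin.ext (by simpa [Fin.ext_iff] using h)⟩
    have he : univ.map e = Ici k := by
      ext j
      simp only [mem_map, mem_univ, true_and, mem_Ici]
      constructor
      · rintro ⟨i, rfl⟩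
        exact Fin.le_def.2 (Nat.le_add_right _ _)
      · intro hj
        exact ⟨⟨j.val - k.val, by omega⟩, Fin.ext (show k.val + (j.val - k.val) = j.val by omega)⟩
    rw [divSum_eq_divDiff, ← he, divDiff_map]
    rfl

theorem stmt11_general (n : ℕ) (r : Fin (n+1) → ℝ) (hr : StrictMono r) (h0 : r 0 = 0)
    (ρ : ℝ) (hρ : r (Fin.last n) < ρ) (t : ℝ) (k : Fin (n+1)) :
    GB n r k t
      = ((ρ - r k) / ρ) * GB (n+1) (Fin.snoc r ρ) k.castSucc t
        + ((Fin.snoc r ρ : Fin (n+2) → ℝ) k.succ / ρ) * GB (n+1) (Fin.snoc r ρ) k.succ t := by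
  have hρ0 : ρ ≠ 0 := ((h0 ▸ hr.monotone (Fin.zero_le _) : 0 ≤ r (Fin.last n)).trans_lt hρ).ne'
  have hinj : Function.Injective (Fin.snoc r ρ : Fin (n + 2) → ℝ) :=
    Fin.snoc_injective_of_injective hr.injective fun ⟨i, hi⟩ =>
      (hr.monotone (Fin.le_last i)).not_gt (hi ▸ hρ)
  have hrec := Fin.sub_mul_divDiff_snoc hinj (t ^ ·) k
  have hprod := Fin.mul_prod_Ioi_succ_snoc r ρ k
  have hsign : (-1 : ℝ) ^ (n + 1 - k.castSucc.val) = -(-1) ^ (n - k.val) := by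
    rw [Fin.val_castSucc, Nat.sub_add_comm k.is_le, pow_succ, mul_neg_one]
  have hsign' : n + 1 - k.succ.val = n - k.val := by simp
  rw [GB_eq_divDiff, GB_eq_divDiff, GB_eq_divDiff, Fin.prod_Ioi_castSucc_snoc, hsign, hsign']
  field_simp
  linear_combination (ρ * ∏ j ∈ Ioi k, r j) * hrec
    - divDiff (Fin.snoc r ρ : Fin (n + 2) → ℝ) (t ^ ·) (Ici k.succ) * hprod

/-- Dimension elevation: adjoining an exponent rho greater than r n, each order-n
Gelfond-Bernstein basis function is the stated combination of two order-(n+1) ones. -/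
theorem stmt11 (n : ℕ) (r : Fin (n+1) → ℝ) (hr : StrictMono r) (h0 : r 0 = 0)
    (ρ : ℝ) (hρ : r (Fin.last n) < ρ) (t : ℝ) (ht : 0 < t) (k : Fin (n+1)) :
    GB n r k t
      = ((ρ - r k) / ρ) * GB (n+1) (Fin.snoc r ρ) k.castSucc t
        + ((Fin.snoc r ρ : Fin (n+2) → ℝ) k.succ / ρ) * GB (n+1) (Fin.snoc r ρ) k.succ t :=
  stmt11_general n r hr h0 ρ hρ t k
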